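/- arXiv:math/0112133 — 3 statements merged into one kernel-verified Lean document; each statement's English description precedes it below -/
import Mathlib

section
/- Let λ ⊆ l×k be a partition with Frobenius notation λ = (α₁,…,α_t | β₁,…,β_t), so t = diag(λ) is the side of the largest square contained in λ. For any hook partition (α|β) ⊆ l×k and any partition ν ⊆ l×k, every partition ρ with ρ₁ ≤ k, c^ρ_{(α|β),ν} ≠ 0 satisfies |ρ| − |core_n(ρ)| ≤ n, i.e., at most one n-rim hook can be removed from ρ (r_n(ρ) ≤ 1), where n = l+k. -/
/-!
Column-strictness of a Littlewood–Richardson tableau of shape `ρ / (a | b)` and content `ν`,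
whose entries are at most `l`, forces `ρ` into the shape `(k^(l+1), 1^b)`. Put `ρ` on the
`(l + k)`-abacus with `b + l + 1` beads: every bead lies at a position `≤ l + k + b`, and the
`b` beads of the rows of length `≤ 1` fill all but at most one of the positions `0, …, b`.
Removing an `(l + k)`-rim hook moves a bead from `x ≥ l + k` down to the empty position
`x - (l + k) ≤ b`; afterwards the positions `0, …, b` are all occupied, so no bead can move
down by `l + k` any more.
-/
open YoungDiagram

namespace QCGrass

/-- The rectangular Young diagram with `m` rows of length `M`. -/
def rect (m M : ℕ) : YoungDiagram :=
  ⟨Finset.range m ×ˢ Finset.range M, by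
    intro a b hba ha
    simp only [Finset.coe_product, Set.mem_prod, Finset.mem_coe, Finset.mem_range] at *
    exact ⟨lt_of_le_of_lt hba.1 ha.1, lt_of_le_of_lt hba.2 ha.2⟩⟩

/-- The cells of the skew shape `nu / lam`. -/
def skewCells (lam nu : YoungDiagram) : Finset (ℕ × ℕ) := nu.cells \ lam.cells

/-- `T` is a Littlewood–Richardson skew tableau of shape `nu / lam` and content `mu`:
entries (valued in `{1, 2, …}`, with `0` meaning "no entry") are supported exactly on the
skew shape `nu / lam`, weakly increase along rows, strictly increase down columns, the number
of entries equal to `r + 1` is the `r`-th row length of `mu`, and the reverse reading word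
(rows read right to left, top to bottom) is a lattice word. -/
def IsLRTableau (lam mu nu : YoungDiagram) (T : ℕ × ℕ → ℕ) : Prop :=
  lam ≤ nu ∧
  (∀ p : ℕ × ℕ, 1 ≤ T p ↔ p ∈ skewCells lam nu) ∧
  (∀ i j j' : ℕ, j ≤ j' → (i, j) ∈ skewCells lam nu → (i, j') ∈ skewCells lam nu →
      T (i, j) ≤ T (i, j')) ∧
  (∀ i i' j : ℕ, i < i' → (i, j) ∈ skewCells lam nu → (i', j) ∈ skewCells lam nu →
      T (i, j) < T (i', j)) ∧
  (∀ r : ℕ, ((skewCells lam nu).filter (fun p => T p = r + 1)).card = mu.rowLen r) ∧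
  (∀ i j r : ℕ,
      ((skewCells lam nu).filter
        (fun p => T p = r + 2 ∧ (p.1 < i ∨ (p.1 = i ∧ j ≤ p.2)))).card ≤
      ((skewCells lam nu).filter
        (fun p => T p = r + 1 ∧ (p.1 < i ∨ (p.1 = i ∧ j ≤ p.2)))).card)

/-- The Littlewood–Richardson coefficient `c^nu_{lam, mu}`, defined as the number of
Littlewood–Richardson skew tableaux of shape `nu / lam` and content `mu`. -/
noncomputable def lrCoeff (lam mu nu : YoungDiagram) : ℕ :=
  Nat.card {T : ℕ × ℕ → ℕ // IsLRTableau lam mu nu T}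

/-- The set of boxes (in `0`-indexed matrix coordinates) of `mu` rotated 180 degrees and
placed in the lower-right corner of the `l × k` rectangle. -/
def rotSet (l k : ℕ) (mu : YoungDiagram) : Set (ℕ × ℕ) :=
  {p | p.1 < l ∧ p.2 < k ∧ k - mu.rowLen (l - 1 - p.1) ≤ p.2}

/-- Two boxes are adjacent when they share an edge. -/
def Adjacent (p q : ℕ × ℕ) : Prop :=
  (p.1 = q.1 ∧ (p.2 = q.2 + 1 ∨ q.2 = p.2 + 1)) ∨
  (p.2 = q.2 ∧ (p.1 = q.1 + 1 ∨ q.1 = p.1 + 1))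

/-- `mu` is obtained from `lam` by removing a legal `n`-rim hook: `mu ⊆ lam` (so the removal
leaves a Young diagram), the removed set has `n` boxes, is edge-connected, and contains
no `2 × 2` square. -/
def IsRimHookRemoval (n : ℕ) (lam mu : YoungDiagram) : Prop :=
  mu ≤ lam ∧ (skewCells mu lam).card = n ∧
  (∀ p ∈ skewCells mu lam, ∀ q ∈ skewCells mu lam,
    Relation.ReflTransGen
      (fun a b => a ∈ skewCells mu lam ∧ b ∈ skewCells mu lam ∧ Adjacent a b) p q) ∧
  ¬ ∃ i j : ℕ, (i, j) ∈ skewCells mu lam ∧ (i + 1, j) ∈ skewCells mu lam ∧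
      (i, j + 1) ∈ skewCells mu lam ∧ (i + 1, j + 1) ∈ skewCells mu lam

/-- One legal `n`-rim hook removal step. -/
def RimStep (n : ℕ) (lam mu : YoungDiagram) : Prop := IsRimHookRemoval n lam mu

/-- A diagram is an `n`-core when no legal `n`-rim hook can be removed from it. -/
def IsCore (n : ℕ) (t : YoungDiagram) : Prop := ¬ ∃ s, RimStep n t s

/-- `ReachesIn n m a b` : `b` is obtained from `a` by `m` successive legal `n`-rim hook
removals. -/
def ReachesIn (n : ℕ) : ℕ → YoungDiagram → YoungDiagram → Prop
  | 0 => fun a b => a = b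
  | m + 1 => fun a b => ∃ c, RimStep n a c ∧ ReachesIn n m c b

/-- The width (number of occupied columns) of the strip removed in passing
from `lam` to `mu`. -/
def hookWidth (lam mu : YoungDiagram) : ℕ := ((skewCells mu lam).image Prod.snd).card

/-- The height (number of occupied rows) of the strip removed in passing
from `lam` to `mu`. -/
def hookHeight (lam mu : YoungDiagram) : ℕ := ((skewCells mu lam).image Prod.fst).card

/-- `ReachesInSign n k m s a b` : `b` is obtained from `a` by `m` successive legal `n`-rim
hook removals, and `s = ∏ (-1)^(k - width(R_i))` over the removed hooks `R_i`. -/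
def ReachesInSign (n k : ℕ) : ℕ → ℤ → YoungDiagram → YoungDiagram → Prop
  | 0 => fun s a b => a = b ∧ s = 1
  | m + 1 => fun s a b => ∃ c s', RimStep n a c ∧ ReachesInSign n k m s' c b ∧
      s = (-1) ^ (k - hookWidth a c) * s'

/-- `diagLen lam` is the number of diagonal boxes of `lam`, i.e. the side length of the
largest square contained in `lam`. -/
def diagLen (lam : YoungDiagram) : ℕ := (lam.cells.filter fun p => p.1 = p.2).card

/-- A `d × d` square of boxes fits inside `lam ∩ rotate(mu)` within the `l × k` rectangle. -/
def SquareFits (l k : ℕ) (lam mu : YoungDiagram) (d : ℕ) : Prop :=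
  ∃ i j : ℕ, ∀ i' j' : ℕ, i ≤ i' → i' < i + d → j ≤ j' → j' < j + d →
    (i', j') ∈ lam.cells ∧ (i', j') ∈ rotSet l k mu

/-- The triple product `σ_lam · σ_mu · σ_nu` is nonzero in `H^*(Gr(l, l+k))`: some `rho ⊆ l × k`
has `c^rho_{lam,mu} ≠ 0` and `rho` is disjoint from `rotate(nu)`. -/
def TripleNonzero (l k : ℕ) (lam mu nu : YoungDiagram) : Prop :=
  ∃ rho, rho ≤ rect l k ∧ lrCoeff lam mu rho ≠ 0 ∧
    ∀ i, i < l → rho.rowLen i + nu.rowLen (l - 1 - i) ≤ k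

lemma mem_rect {l k : ℕ} {p : ℕ × ℕ} : p ∈ rect l k ↔ p.1 < l ∧ p.2 < k := by
  rw [← YoungDiagram.mem_cells]
  simp [rect]

lemma rowLen_le_rowLen {μ ν : YoungDiagram} (hle : μ ≤ ν) (i : ℕ) : μ.rowLen i ≤ ν.rowLen i := by
  by_contra! hlt
  exact (ν.rowLen i).lt_irrefl (mem_iff_lt_rowLen.1 (hle (mem_iff_lt_rowLen.2 hlt)))

lemma rowLen_eq_zero_of_le_rect {μ : YoungDiagram} {l k : ℕ} (hμ : μ ≤ rect l k) :
    μ.rowLen l = 0 := by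
  by_contra! hpos
  exact (mem_rect.1 (hμ (mem_iff_lt_rowLen.2 (Nat.pos_of_ne_zero hpos)))).1.false

lemma mem_skewCells {μ ν : YoungDiagram} {i j : ℕ} :
    (i, j) ∈ skewCells μ ν ↔ μ.rowLen i ≤ j ∧ j < ν.rowLen i := by
  simp [skewCells, mem_iff_lt_rowLen, and_comm]

lemma card_skewCells_eq_sum {μ ν : YoungDiagram} (hle : μ ≤ ν) {t : Finset ℕ}
    (ht : ∀ p ∈ skewCells μ ν, p.1 ∈ t) :
    (skewCells μ ν).card = ∑ i ∈ t, (ν.rowLen i - μ.rowLen i) := by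
  rw [Finset.card_eq_sum_card_fiberwise ht]
  refine Finset.sum_congr rfl fun i _ => ?_
  have hrow : (skewCells μ ν).filter (fun p => p.1 = i) = ν.row i \ μ.row i := by
    ext p
    simp only [skewCells, Finset.mem_filter, Finset.mem_sdiff, mem_cells, mem_row_iff, not_and]
    tauto
  rw [hrow, Finset.card_sdiff_of_subset, ← rowLen_eq_card, ← rowLen_eq_card]
  intro p
  simp only [mem_row_iff]
  exact fun hp => ⟨hle hp.1, hp.2⟩

lemma ReachesIn.card_add {n m : ℕ} {μ ν : YoungDiagram} (h : ReachesIn n m μ ν) :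
    ν.card + m * n = μ.card := by
  induction m generalizing μ with
  | zero => simp [show μ = ν from h]
  | succ m ih =>
    obtain ⟨σ, ⟨hle, hcard, -⟩, hσ⟩ := h
    have := Finset.card_sdiff_of_subset (cells_subset_iff.2 hle)
    have := Finset.card_le_card (cells_subset_iff.2 hle)
    rw [skewCells] at hcard
    have := ih hσ
    simp only [YoungDiagram.card] at *
    rw [Nat.succ_mul]
    omega

section LRTableau

variable {lam mu nu : YoungDiagram} {T : ℕ × ℕ → ℕ}

lemma exists_isLRTableau_of_lrCoeff_ne_zero (h : lrCoeff lam mu nu ≠ 0) :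
    ∃ T, IsLRTableau lam mu nu T := by
  obtain ⟨⟨T, hT⟩⟩ := (Nat.card_ne_zero.1 h).1
  exact ⟨T, hT⟩

lemma IsLRTableau.apply_le (hT : IsLRTableau lam mu nu T) {l : ℕ} (hmu : mu.rowLen l = 0)
    {p : ℕ × ℕ} (hp : p ∈ skewCells lam nu) : T p ≤ l := by
  by_contra! hlt
  have hzero : mu.rowLen (T p - 1) = 0 := by
    have := mu.rowLen_anti l (T p - 1) (by omega)
    omega
  have hcount := hT.2.2.2.2.1 (T p - 1)
  rw [hzero, Finset.card_eq_zero] at hcount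
  have hpos := (hT.2.1 p).2 hp
  exact Finset.notMem_empty p (hcount ▸ Finset.mem_filter.2 ⟨hp, by omega⟩)

lemma IsLRTableau.add_one_le_apply (hT : IsLRTableau lam mu nu T) {i j d : ℕ}
    (hrun : ∀ e ≤ d, (i + e, j) ∈ skewCells lam nu) : d + 1 ≤ T (i + d, j) := by
  induction d with
  | zero => exact (hT.2.1 _).2 (hrun 0 le_rfl)
  | succ d ih =>
    have hlt := hT.2.2.2.1 (i + d) (i + (d + 1)) j (by omega) (hrun d (by omega)) (hrun _ le_rfl)
    have := ih fun e he => hrun e (by omega)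
    omega

/-- By column-strictness, a column of `nu / lam` with more than `l` cells would need an entry
larger than `l`. -/
lemma IsLRTableau.mem_of_mem_add (hT : IsLRTableau lam mu nu T) {l : ℕ} (hmu : mu.rowLen l = 0)
    {i j : ℕ} (h : (i + l, j) ∈ nu) : (i, j) ∈ lam := by
  by_contra hij
  have hrun : ∀ e ≤ l, (i + e, j) ∈ skewCells lam nu := fun e he => by
    simp only [skewCells, Finset.mem_sdiff, mem_cells]
    exact ⟨nu.up_left_mem (by omega) le_rfl h, fun h' => hij (lam.up_left_mem (by omega) le_rfl h')⟩
  have := hT.add_one_le_apply hrun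
  have := hT.apply_le hmu (hrun l le_rfl)
  omega

end LRTableau

section Hook

variable {a b l : ℕ} {h nu rho : YoungDiagram} {T : ℕ × ℕ → ℕ}

lemma IsLRTableau.rowLen_le_one_of_hook (hT : IsLRTableau h nu rho T)
    (hhook : ∀ i : ℕ, h.rowLen i = if i = 0 then a + 1 else if i ≤ b then 1 else 0)
    (hnu : nu.rowLen l = 0) (i : ℕ) (hi : l < i) : rho.rowLen i ≤ 1 := by
  by_contra! h2
  have := mem_iff_lt_rowLen.1 <| hT.mem_of_mem_add hnu <|
    (show i - l + l = i by omega) ▸ mem_iff_lt_rowLen.2 h2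
  rw [hhook] at this
  split_ifs at this <;> omega

lemma IsLRTableau.rowLen_eq_zero_of_hook (hT : IsLRTableau h nu rho T)
    (hhook : ∀ i : ℕ, h.rowLen i = if i = 0 then a + 1 else if i ≤ b then 1 else 0)
    (hnu : nu.rowLen l = 0) : rho.rowLen (b + l + 1) = 0 := by
  by_contra! hpos
  rw [show b + l + 1 = b + 1 + l by omega] at hpos
  have := mem_iff_lt_rowLen.1 <| hT.mem_of_mem_add hnu (j := 0) <|
    mem_iff_lt_rowLen.2 (Nat.pos_of_ne_zero hpos)
  rw [hhook] at this
  split_ifs at this <;> omega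

end Hook

lemma sum_Icc_sub_add_eq {f g : ℕ → ℕ} {i₀ i₁ : ℕ} (hi : i₀ ≤ i₁) (hgf : ∀ i, g i ≤ f i)
    (hshift : ∀ i, i₀ ≤ i → i < i₁ → g i + 1 = f (i + 1)) :
    ∑ i ∈ Finset.Icc i₀ i₁, (f i - g i) + g i₁ + i₀ = f i₀ + i₁ := by
  induction i₁, hi using Nat.le_induction with
  | base =>
    have := hgf i₀
    simp only [Finset.Icc_self, Finset.sum_singleton]
    omega
  | succ i₁ hi ih =>
    rw [Finset.sum_Icc_succ_top (by omega)]
    have := ih fun i h₁ h₂ => hshift i h₁ (by omega)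
    have := hshift i₁ hi (by omega)
    have := hgf (i₁ + 1)
    omega

lemma exists_vertical_step_of_reflTransGen {S : Finset (ℕ × ℕ)} {p q : ℕ × ℕ}
    (hpq : Relation.ReflTransGen (fun a b => a ∈ S ∧ b ∈ S ∧ Adjacent a b) p q) {r : ℕ}
    (hp : p.1 ≤ r) (hq : r < q.1) : ∃ j, (r, j) ∈ S ∧ (r + 1, j) ∈ S := by
  induction hpq with
  | refl => omega
  | @tail b c _ hbc ih =>
    by_cases hb : r < b.1
    · exact ih hb
    obtain ⟨hbS, hcS, hadj⟩ := hbc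
    rcases b with ⟨b₁, b₂⟩
    rcases c with ⟨c₁, c₂⟩
    simp only [Adjacent] at hadj hb hq
    obtain ⟨rfl, rfl, rfl⟩ : b₁ = r ∧ c₁ = r + 1 ∧ c₂ = b₂ := by omega
    exact ⟨c₂, hbS, hcS⟩

section RimHook

variable {n : ℕ} {lam mu : YoungDiagram}

lemma IsRimHookRemoval.rowLen_succ_le (h : IsRimHookRemoval n lam mu) (i : ℕ) :
    lam.rowLen (i + 1) ≤ mu.rowLen i + 1 := by
  by_contra! hlt
  have := lam.rowLen_anti i (i + 1) (by omega)
  have := mu.rowLen_anti i (i + 1) (by omega)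
  refine h.2.2.2 ⟨i, mu.rowLen i, ?_, ?_, ?_, ?_⟩ <;> rw [mem_skewCells] <;> omega

/-- The last identity is the hook-length formula for the size of the removed hook. -/
lemma IsRimHookRemoval.exists_rows (h : IsRimHookRemoval n lam mu) (hn : 0 < n) :
    ∃ i₀ i₁, i₀ ≤ i₁ ∧ mu.rowLen i₁ < lam.rowLen i₁ ∧
      (∀ i, i < i₀ ∨ i₁ < i → mu.rowLen i = lam.rowLen i) ∧
      (∀ i, i₀ ≤ i → i < i₁ → mu.rowLen i + 1 = lam.rowLen (i + 1)) ∧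
      n + mu.rowLen i₁ + i₀ = lam.rowLen i₀ + i₁ := by
  have hborder := h.rowLen_succ_le
  obtain ⟨hle, hcard, hconn, -⟩ := h
  set S := skewCells mu lam
  have hS : S.Nonempty := Finset.card_pos.1 (hcard ▸ hn)
  obtain ⟨⟨i₀, j₀⟩, hpS, hmin⟩ := S.exists_min_image Prod.fst hS
  obtain ⟨⟨i₁, j₁⟩, hqS, hmax⟩ := S.exists_max_image Prod.fst hS
  have hrange : ∀ p ∈ S, i₀ ≤ p.1 ∧ p.1 ≤ i₁ := fun p hp => ⟨hmin p hp, hmax p hp⟩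
  have hmono := rowLen_le_rowLen hle
  have hshift : ∀ i, i₀ ≤ i → i < i₁ → mu.rowLen i + 1 = lam.rowLen (i + 1) := by
    intro i h₀ h₁
    obtain ⟨j, hj, hj'⟩ := exists_vertical_step_of_reflTransGen (hconn _ hpS _ hqS)
      (r := i) (by omega) (by omega)
    rw [mem_skewCells] at hj hj'
    have := hborder i
    omega
  have hout : ∀ i, i < i₀ ∨ i₁ < i → mu.rowLen i = lam.rowLen i := by
    intro i hi
    by_contra hne
    have := hrange _ (mem_skewCells.2 ⟨le_rfl, lt_of_le_of_ne (hmono i) hne⟩)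
    omega
  have hlast : mu.rowLen i₁ < lam.rowLen i₁ :=
    (mem_skewCells.1 hqS).1.trans_lt (mem_skewCells.1 hqS).2
  have hi : i₀ ≤ i₁ := hmax _ hpS
  have hsize : S.card = ∑ i ∈ Finset.Icc i₀ i₁, (lam.rowLen i - mu.rowLen i) :=
    card_skewCells_eq_sum hle fun p hp => Finset.mem_Icc.2 (hrange p hp)
  have := sum_Icc_sub_add_eq hi hmono hshift
  exact ⟨i₀, i₁, hi, hlast, hout, hshift, by omega⟩

end RimHook

/-- The beta-number of row `i` of `lam`, viewed as a diagram with `N` rows (the position of the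
`i`-th bead on the abacus). -/
def beta (N : ℕ) (lam : YoungDiagram) (i : ℕ) : ℕ := lam.rowLen i + (N - 1 - i)

def betaSet (N : ℕ) (lam : YoungDiagram) : Finset ℕ := (Finset.range N).image (beta N lam)

section Beta

variable {N : ℕ} {lam mu : YoungDiagram}

lemma beta_lt_beta (lam : YoungDiagram) {i j : ℕ} (hij : i < j) (hj : j < N) :
    beta N lam j < beta N lam i := by
  have := lam.rowLen_anti i j hij.le
  unfold beta
  omega

lemma beta_injOn : Set.InjOn (beta N lam) (Finset.range N) := by
  intro i hi j hj hij
  simp only [Finset.coe_range, Set.mem_Iio] at hi hj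
  rcases lt_trichotomy i j with h | h | h
  · exact absurd hij (beta_lt_beta lam h hj).ne'
  · exact h
  · exact absurd hij (beta_lt_beta lam h hi).ne

lemma beta_mem_betaSet {i : ℕ} (hi : i < N) : beta N lam i ∈ betaSet N lam :=
  Finset.mem_image_of_mem _ (Finset.mem_range.2 hi)

lemma card_betaSet : (betaSet N lam).card = N := by
  rw [betaSet, Finset.card_image_of_injOn beta_injOn, Finset.card_range]

lemma betaSet_subset_Iic {k : ℕ} (hk : ∀ i, lam.rowLen i ≤ k) :
    betaSet N lam ⊆ Finset.Iic (k + N - 1) := by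
  intro y hy
  obtain ⟨i, hi, rfl⟩ := Finset.mem_image.1 hy
  have := hk i
  have := Finset.mem_range.1 hi
  rw [Finset.mem_Iic, beta]
  omega

lemma le_card_filter_betaSet {b : ℕ} (hb : b ≤ N) (hthin : ∀ i, N - b ≤ i → lam.rowLen i ≤ 1) :
    b ≤ ((betaSet N lam).filter (· ≤ b)).card := by
  have hsub : (Finset.Ico (N - b) N).image (beta N lam) ⊆ (betaSet N lam).filter (· ≤ b) := by
    intro y hy
    obtain ⟨i, hi, rfl⟩ := Finset.mem_image.1 hy
    rw [Finset.mem_Ico] at hi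
    have := hthin i hi.1
    exact Finset.mem_filter.2 ⟨beta_mem_betaSet hi.2, by unfold beta; omega⟩
  have hinj : Set.InjOn (beta N lam) (Finset.Ico (N - b) N) := beta_injOn.mono fun i hi => by
    simp only [Finset.coe_Ico, Set.mem_Ico, Finset.coe_range, Set.mem_Iio] at hi ⊢
    exact hi.2
  calc b = ((Finset.Ico (N - b) N).image (beta N lam)).card := by
        rw [Finset.card_image_of_injOn hinj, Nat.card_Ico]
        omega
    _ ≤ _ := Finset.card_le_card hsub

lemma IsRimHookRemoval.betaSet_eq {n : ℕ} (h : IsRimHookRemoval n lam mu) (hn : 0 < n)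
    (hN : lam.rowLen N = 0) :
    ∃ x ∈ betaSet N lam, n ≤ x ∧ x - n ∉ betaSet N lam ∧
      betaSet N mu = insert (x - n) ((betaSet N lam).erase x) := by
  obtain ⟨i₀, i₁, hi, hlast, hout, hshift, hlen⟩ := h.exists_rows hn
  have hi₁ : i₁ < N := by
    by_contra! hle
    have := lam.rowLen_anti N i₁ hle
    omega
  set x := beta N lam i₀
  have hxB : x ∈ betaSet N lam := beta_mem_betaSet (by omega)
  have hnx : n ≤ x := by unfold x beta; omega
  have hxn : x - n = beta N mu i₁ := by unfold x beta; omega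
  have hmove : ∀ i < N, i ≠ i₁ → ∃ j < N, j ≠ i₀ ∧ beta N mu i = beta N lam j := by
    intro i hiN hne
    by_cases hin : i < i₀ ∨ i₁ < i
    · exact ⟨i, hiN, by omega, by unfold beta; rw [hout i hin]⟩
    · have := hshift i (by omega) (by omega)
      exact ⟨i + 1, by omega, by omega, by unfold beta; omega⟩
  have hsub : betaSet N mu ⊆ insert (x - n) ((betaSet N lam).erase x) := by
    intro y hy
    obtain ⟨i, hiN, rfl⟩ := Finset.mem_image.1 hy
    rw [Finset.mem_range] at hiN
    by_cases hne : i = i₁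
    · exact hne ▸ hxn ▸ Finset.mem_insert_self _ _
    obtain ⟨j, hjN, hj, heq⟩ := hmove i hiN hne
    refine Finset.mem_insert_of_mem (Finset.mem_erase.2 ⟨?_, heq ▸ beta_mem_betaSet hjN⟩)
    rw [heq]
    exact fun h => hj (beta_injOn (by simpa using hjN) (by simpa using hi.trans_lt hi₁) h)
  have hcard := Finset.card_le_card hsub
  rw [card_betaSet] at hcard
  have herase := Finset.card_erase_of_mem hxB
  rw [card_betaSet] at herase
  refine ⟨x, hxB, hnx, fun hmem => ?_, (Finset.eq_of_subset_of_card_le hsub ?_)⟩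
  · rw [Finset.insert_eq_of_mem (Finset.mem_erase.2 ⟨by omega, hmem⟩)] at hcard
    omega
  · rw [card_betaSet]
    exact (Finset.card_insert_le _ _).trans (by omega)

end Beta

lemma Iic_subset_insert_erase {B : Finset ℕ} {b x z : ℕ} (hbx : b < x) (hzB : z ∉ B)
    (hzb : z ≤ b) (hB : b ≤ (B.filter (· ≤ b)).card) :
    Finset.Iic b ⊆ insert z (B.erase x) := by
  have hlow : insert z (B.filter (· ≤ b)) ⊆ Finset.Iic b := by
    intro y hy
    rcases Finset.mem_insert.1 hy with rfl | hy
    · exact Finset.mem_Iic.2 hzb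
    · exact Finset.mem_Iic.2 (Finset.mem_filter.1 hy).2
  have hfull := Finset.eq_of_subset_of_card_le hlow (by
    rw [Nat.card_Iic, Finset.card_insert_of_notMem fun h => hzB (Finset.mem_filter.1 h).1]
    omega)
  rw [← hfull]
  refine Finset.insert_subset_insert _ fun y hy => ?_
  obtain ⟨hyB, hyb⟩ := Finset.mem_filter.1 hy
  exact Finset.mem_erase.2 ⟨by omega, hyB⟩

theorem not_rimStep_rimStep {l k b : ℕ} {lam mu nu : YoungDiagram} (hb : b < l + k)
    (hk : ∀ i, lam.rowLen i ≤ k) (hthin : ∀ i, l < i → lam.rowLen i ≤ 1)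
    (hrows : lam.rowLen (b + l + 1) = 0)
    (h₁ : RimStep (l + k) lam mu) (h₂ : RimStep (l + k) mu nu) : False := by
  have hle := rowLen_le_rowLen h₁.1
  obtain ⟨x, hxB, hnx, hxn, hmu⟩ := h₁.betaSet_eq (by omega) hrows
  obtain ⟨y, hyB, hny, hyn, -⟩ := h₂.betaSet_eq (by omega) (Nat.eq_zero_of_le_zero (hrows ▸ hle _))
  have hx := Finset.mem_Iic.1 (betaSet_subset_Iic hk hxB)
  have hy := Finset.mem_Iic.1 (betaSet_subset_Iic (fun i => (hle i).trans (hk i)) hyB)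
  have hfull : Finset.Iic b ⊆ betaSet (b + l + 1) mu := hmu ▸
    Iic_subset_insert_erase (by omega) hxn (by omega)
      (le_card_filter_betaSet (by omega) fun i hi => hthin i (by omega))
  exact hyn (hfull (Finset.mem_Iic.2 (by omega)))

theorem hook_times_class_degree_le_one_general (l k a b : ℕ)
    (h nu rho : YoungDiagram)
    (hhook : ∀ i : ℕ, h.rowLen i = if i = 0 then a + 1 else if i ≤ b then 1 else 0)
    (hhk : h ≤ rect l k) (hnu : nu ≤ rect l k) (hrho : rho.rowLen 0 ≤ k)
    (hlr : lrCoeff h nu rho ≠ 0) :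
    ∀ (m : ℕ) (tau : YoungDiagram), ReachesIn (l + k) m rho tau → IsCore (l + k) tau →
      m ≤ 1 ∧ rho.card - tau.card ≤ l + k := by
  obtain ⟨T, hT⟩ := exists_isLRTableau_of_lrCoeff_ne_zero hlr
  have hnu_rows := rowLen_eq_zero_of_le_rect hnu
  have hbl : b < l := by
    have hpos : 0 < h.rowLen b := by rw [hhook]; split_ifs <;> omega
    exact (mem_rect.1 (hhk (mem_iff_lt_rowLen.2 hpos))).1
  have hthin := hT.rowLen_le_one_of_hook hhook hnu_rows
  have hrows := hT.rowLen_eq_zero_of_hook hhook hnu_rows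
  intro m tau hreach _
  have hm : m ≤ 1 := by
    by_contra! hm
    obtain ⟨m, rfl⟩ := Nat.exists_eq_add_of_le' hm
    obtain ⟨sigma, h₁, sigma', h₂, -⟩ := hreach
    exact not_rimStep_rimStep (by omega) (fun i => (rho.rowLen_anti 0 i i.zero_le).trans hrho)
      hthin hrows h₁ h₂
  have := hreach.card_add
  have := Nat.mul_le_mul_right (l + k) hm
  exact ⟨hm, by omega⟩

/-- If `h = (a | b) = (a+1, 1^b)` is a hook partition contained in `l × k`,
`nu ⊆ l × k`, and `rho` has first part at most `k` with `c^rho_{h, nu} ≠ 0`, then at most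
one `(l+k)`-rim hook can be removed from `rho` in its reduction to the `(l+k)`-core, i.e.
`r_n(rho) ≤ 1` (equivalently `|rho| - |core_n(rho)| ≤ n`). -/
theorem hook_times_class_degree_le_one (l k a b : ℕ) (hl : 1 ≤ l) (hk : 1 ≤ k)
    (h nu rho : YoungDiagram)
    (hhook : ∀ i : ℕ, h.rowLen i = if i = 0 then a + 1 else if i ≤ b then 1 else 0)
    (hhk : h ≤ rect l k) (hnu : nu ≤ rect l k) (hrho : rho.rowLen 0 ≤ k)
    (hlr : lrCoeff h nu rho ≠ 0) :
    ∀ (m : ℕ) (tau : YoungDiagram), ReachesIn (l + k) m rho tau → IsCore (l + k) tau →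
      m ≤ 1 ∧ rho.card - tau.card ≤ l + k :=
  hook_times_class_degree_le_one_general l k a b h nu rho hhook hhk hnu hrho hlr

end QCGrass
end

section
/- Let λ, μ ⊆ l×k and let d be the side of the largest square in λ ∩ rotate(μ). Let λ̄̃ be obtained from λ by deleting its top d rows and leftmost d columns: (λ̄̃)_i = max(λ_{i+d} − d, 0). Then λ̄̃ ∩ rotate(μ) = ∅ inside the l×k rectangle; i.e., (λ̄̃)_i + μ_{l+1−i} ≤ k for all 1 ≤ i ≤ l. -/
/-! If row `i + d` of `lam` were longer than `d + (k - mu_{l-1-i})`, the `(d + 1)`-square with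
top-left corner `(i, k - mu_{l-1-i})` would lie in `lam ∩ rotate(mu)`. -/

open YoungDiagram

namespace QCGrass

lemma rowLen_le_of_le_rect {l k : ℕ} {lam : YoungDiagram} (h : lam ≤ rect l k) (i : ℕ) :
    lam.rowLen i ≤ k := by
  by_contra! hk
  have := mem_rect.mp (h (mem_iff_lt_rowLen.mpr hk))
  omega

lemma mem_rotSet_of_le {l k : ℕ} {mu : YoungDiagram} {i j i' j' : ℕ}
    (h : (i, j) ∈ rotSet l k mu) (hi : i ≤ i') (hj : j ≤ j') (hl : i' < l) (hk : j' < k) :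
    (i', j') ∈ rotSet l k mu := by
  obtain ⟨-, -, hle⟩ := h
  have := mu.rowLen_anti (l - 1 - i') (l - 1 - i) (by omega)
  exact ⟨hl, hk, by dsimp only at hle ⊢; omega⟩

/-- `lam` is closed up-left and `rotSet l k mu` is closed down-right inside the rectangle. -/
lemma squareFits_of_corners {l k : ℕ} {lam mu : YoungDiagram} {i j n : ℕ}
    (hlam : (i + n, j + n) ∈ lam) (hrot : (i, j) ∈ rotSet l k mu)
    (hl : i + n < l) (hk : j + n < k) : SquareFits l k lam mu (n + 1) :=
  ⟨i, j, fun _ _ hi hi' hj hj' =>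
    ⟨lam.up_left_mem (by omega) (by omega) hlam,
      mem_rotSet_of_le hrot hi hj (by omega) (by omega)⟩⟩

theorem removed_square_disjoint_general (l k d : ℕ) (lam mu : YoungDiagram)
    (hlam : lam ≤ rect l k) (hmu : mu ≤ rect l k)
    (hd' : ¬ SquareFits l k lam mu (d + 1)) :
    ∀ i, i < l → (lam.rowLen (i + d) - d) + mu.rowLen (l - 1 - i) ≤ k := by
  intro i hi
  by_contra! hc
  have hlam_le := rowLen_le_of_le_rect hlam (i + d)
  have hmu_le := rowLen_le_of_le_rect hmu (l - 1 - i)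
  set j := k - mu.rowLen (l - 1 - i)
  have hcorner : (i + d, j + d) ∈ lam := mem_iff_lt_rowLen.mpr (by omega)
  obtain ⟨hil, hjk⟩ := mem_rect.mp (hlam hcorner)
  exact hd' (squareFits_of_corners hcorner ⟨hi, by omega, le_rfl⟩ hil hjk)

/-- If `d` is the side of the largest square in `lam ∩ rotate(mu)` inside
`l × k`, then the partition obtained from `lam` by deleting its top `d` rows and leftmost
`d` columns is disjoint from `rotate(mu)`: `max(lam_{i+d} - d, 0) + mu_{l+1-i} ≤ k` for
all `1 ≤ i ≤ l` (0-indexed below). -/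
theorem removed_square_disjoint (l k d : ℕ) (lam mu : YoungDiagram)
    (hlam : lam ≤ rect l k) (hmu : mu ≤ rect l k)
    (hd : SquareFits l k lam mu d) (hd' : ¬ SquareFits l k lam mu (d + 1)) :
    ∀ i, i < l → (lam.rowLen (i + d) - d) + mu.rowLen (l - 1 - i) ≤ k :=
  removed_square_disjoint_general l k d lam mu hlam hmu hd'

end QCGrass
end

section
/- Let λ ⊆ l×k with d×d ⊆ λ, let λ̃ be λ with its leftmost d columns removed, and let α = (k+d−λ_d, k+d−λ_{d−1}, …, k+d−λ_1), a partition with d parts viewed inside l×(k+d). Then the Littlewood–Richardson coefficient c^ρ_{λ̃,α} is nonzero for ρ the partition whose first d parts equal k and whose remaining parts are those of λ̄̃ (λ with top d rows and left d columns removed); i.e., σ_ρ appears with nonzero coefficient in the expansion of σ_{λ̃}·σ_α. -/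
open YoungDiagram

namespace QCGrass

/-- Let `lam ⊆ l × k` contain a `d × d` square, let `lamTilde` be `lam` with
its leftmost `d` columns removed, let `alpha = (k+d-lam_d, …, k+d-lam_1)` (the complement
of the bottom `d` rows of `rotate(lam)` in `l × (k+d)`), and let `rho = ((k^d), lam-bar-tilde)`
be the partition whose first `d` parts equal `k` and whose remaining parts are those of
`lam` with top `d` rows and left `d` columns removed.  Then `c^rho_{lamTilde, alpha} ≠ 0`. -/
theorem buch_second_step (l k d : ℕ) (lam lamTilde alpha rho : YoungDiagram)
    (hlam : lam ≤ rect l k) (hsq : rect d d ≤ lam)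
    (hTilde : ∀ i : ℕ, lamTilde.rowLen i = lam.rowLen i - d)
    (halpha : ∀ i : ℕ, alpha.rowLen i = if i < d then k + d - lam.rowLen (d - 1 - i) else 0)
    (hrho : ∀ i : ℕ, rho.rowLen i = if i < d then k else lam.rowLen i - d) :
    lrCoeff lamTilde alpha rho ≠ 0 := by
  classical
  -- every row of lam has length ≤ k
  have hlamk : ∀ i, lam.rowLen i ≤ k := by
    intro i
    by_contra h
    push_neg at h
    have hm : (i, k) ∈ lam := YoungDiagram.mem_iff_lt_rowLen.2 h
    have hmem : (i, k) ∈ (rect l k).cells := hlam ((YoungDiagram.mem_cells _).2 hm)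
    simp only [rect, Finset.mem_product, Finset.mem_range] at hmem
    omega
  -- colLen / rowLen duality
  have hcol : ∀ t m : ℕ, lam.colLen m ≤ t ↔ lam.rowLen t ≤ m := by
    intro t m
    rw [← not_iff_not]
    push_neg
    rw [← YoungDiagram.mem_iff_lt_colLen, ← YoungDiagram.mem_iff_lt_rowLen]
  -- rows with index < d have length ≥ d
  have hd1 : ∀ i, i < d → d ≤ lam.rowLen i := by
    intro i hi
    have hm : (i, d - 1) ∈ (rect d d).cells := by
      simp only [rect, Finset.mem_product, Finset.mem_range]
      omega
    have h2 := YoungDiagram.mem_iff_lt_rowLen.1 ((YoungDiagram.mem_cells _).1 (hsq hm))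
    omega
  -- description of the skew cells
  have hskew : ∀ i j : ℕ, (i, j) ∈ skewCells lamTilde rho ↔
      i < d ∧ lam.rowLen i ≤ j + d ∧ j < k := by
    intro i j
    simp only [skewCells, Finset.mem_sdiff, YoungDiagram.mem_cells,
      YoungDiagram.mem_iff_lt_rowLen, hTilde, hrho]
    by_cases hi : i < d
    · rw [if_pos hi]; have := hd1 i hi; omega
    · rw [if_neg hi]; omega
  have hle : lamTilde ≤ rho := by
    intro p hp
    obtain ⟨i, j⟩ := p
    rw [YoungDiagram.mem_iff_lt_rowLen, hTilde] at hp
    rw [YoungDiagram.mem_iff_lt_rowLen, hrho]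
    have := hlamk i
    split_ifs <;> omega
  -- colLen bound on skew cells
  have hcS : ∀ i j : ℕ, (i, j) ∈ skewCells lamTilde rho → lam.colLen (j + d) ≤ i := by
    intro i j h
    exact (hcol i (j + d)).2 ((hskew i j).1 h).2.1
  -- the tableau
  set T : ℕ × ℕ → ℕ :=
    fun p => if p ∈ skewCells lamTilde rho then p.1 + 1 - lam.colLen (p.2 + d) else 0
    with hTdef
  have hTval : ∀ i j : ℕ, (i, j) ∈ skewCells lamTilde rho →
      T (i, j) = i + 1 - lam.colLen (j + d) := by
    intro i j hp; rw [hTdef]; simp only [if_pos hp]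
  have hTzero : ∀ p : ℕ × ℕ, p ∉ skewCells lamTilde rho → T p = 0 := by
    intro p hp; rw [hTdef]; simp only [if_neg hp]
  have hLR : IsLRTableau lamTilde alpha rho T := by
    refine ⟨hle, ?_, ?_, ?_, ?_, ?_⟩
    · -- support
      intro p
      by_cases hp : p ∈ skewCells lamTilde rho
      · obtain ⟨i, j⟩ := p
        rw [hTval i j hp]
        have := hcS i j hp
        exact iff_of_true (by omega) hp
      · rw [hTzero p hp]
        exact iff_of_false (by omega) hp
    · -- rows weakly increase
      intro i j j' hjj hj hj'
      rw [hTval i j hj, hTval i j' hj']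
      have h1 := hcS i j' hj'
      have h2 := lam.colLen_anti (j + d) (j' + d) (by omega)
      omega
    · -- columns strictly increase
      intro i i' j hii hj hj'
      rw [hTval i j hj, hTval i' j hj']
      have h1 := hcS i j hj
      have h2 := hcS i' j hj'
      omega
    · -- content
      intro r
      by_cases hrd : r < d
      · have hdl : d ≤ lam.rowLen (d - 1 - r) := hd1 _ (by omega)
        have hkl := hlamk (d - 1 - r)
        have hrhs : alpha.rowLen r = (Finset.Ico (lam.rowLen (d - 1 - r) - d) k).card := by
          rw [halpha r, if_pos hrd, Nat.card_Ico]
          omega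
        rw [hrhs]
        apply Finset.card_bij (fun p _ => p.2)
        · intro p hp
          rw [Finset.mem_filter] at hp
          obtain ⟨hpS, hpT⟩ := hp
          obtain ⟨i, j⟩ := p
          have hs := (hskew i j).1 hpS
          have hc := hcS i j hpS
          rw [hTval i j hpS] at hpT
          simp only at hpT hc ⊢
          have hij : i = r + lam.colLen (j + d) := by omega
          have hcle : lam.colLen (j + d) ≤ d - 1 - r := by omega
          have := (hcol (d - 1 - r) (j + d)).1 hcle
          rw [Finset.mem_Ico]
          omega
        · intro p hp q hq hpq
          rw [Finset.mem_filter] at hp hq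
          obtain ⟨i, j⟩ := p
          obtain ⟨i', j'⟩ := q
          simp only at hpq
          have hc := hcS i j hp.1
          have hc' := hcS i' j' hq.1
          have h1 := hp.2; have h2 := hq.2
          rw [hTval i j hp.1] at h1
          rw [hTval i' j' hq.1] at h2
          subst hpq
          have : i = i' := by omega
          simp [this]
        · intro j hj
          rw [Finset.mem_Ico] at hj
          have hcle : lam.colLen (j + d) ≤ d - 1 - r := (hcol _ _).2 (by omega)
          have hmem : (r + lam.colLen (j + d), j) ∈ skewCells lamTilde rho :=
            (hskew _ _).2 ⟨by omega, (hcol _ _).1 (by omega), hj.2⟩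
          refine ⟨(r + lam.colLen (j + d), j), Finset.mem_filter.2 ⟨hmem, ?_⟩, rfl⟩
          rw [hTval _ _ hmem]
          have := hcS _ _ hmem
          omega
      · rw [halpha r, if_neg hrd, Finset.card_eq_zero, Finset.filter_eq_empty_iff]
        intro p hp
        obtain ⟨i, j⟩ := p
        have hs := (hskew i j).1 hp
        have hc := hcS i j hp
        rw [hTval i j hp]
        omega
    · -- lattice word condition
      intro I J r
      apply Finset.card_le_card_of_injOn (fun p => (p.1 - 1, p.2))
      · intro p hp
        rw [Finset.mem_coe, Finset.mem_filter] at hp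
        obtain ⟨hpS, hpT, hreg⟩ := hp
        obtain ⟨i, j⟩ := p
        have hs := (hskew i j).1 hpS
        have hc := hcS i j hpS
        rw [hTval i j hpS] at hpT
        simp only at hpT hreg ⊢
        have hij : i = r + 1 + lam.colLen (j + d) := by omega
        have hmem : (i - 1, j) ∈ skewCells lamTilde rho :=
          (hskew _ _).2 ⟨by omega, (hcol _ _).1 (by omega), hs.2.2⟩
        rw [Finset.mem_coe, Finset.mem_filter]
        refine ⟨hmem, ?_, Or.inl (by omega)⟩
        rw [hTval _ _ hmem]
        have := hcS _ _ hmem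
        omega
      · intro p hp q hq hpq
        rw [Finset.mem_coe, Finset.mem_filter] at hp hq
        obtain ⟨i, j⟩ := p
        obtain ⟨i', j'⟩ := q
        have hc := hcS i j hp.1
        have hc' := hcS i' j' hq.1
        have h1 := hp.2.1; have h2 := hq.2.1
        rw [hTval i j hp.1] at h1
        rw [hTval i' j' hq.1] at h2
        simp only [Prod.mk.injEq] at hpq ⊢
        obtain ⟨hpq1, hpq2⟩ := hpq
        subst hpq2
        omega
  -- conclude
  unfold lrCoeff
  rw [Nat.card_ne_zero]
  constructor
  · exact ⟨⟨T, hLR⟩⟩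
  · set N := alpha.colLen 0 with hN
    have hbound : ∀ T' : ℕ × ℕ → ℕ, IsLRTableau lamTilde alpha rho T' → ∀ p, T' p ≤ N := by
      intro T' hT' p
      by_cases hp : p ∈ skewCells lamTilde rho
      · have h1 : 1 ≤ T' p := (hT'.2.1 p).2 hp
        have hcard := hT'.2.2.2.2.1 (T' p - 1)
        have hmem : p ∈ (skewCells lamTilde rho).filter (fun q => T' q = (T' p - 1) + 1) :=
          Finset.mem_filter.2 ⟨hp, by omega⟩
        have h2 : 0 < alpha.rowLen (T' p - 1) := by
          rw [← hcard]; exact Finset.card_pos.2 ⟨p, hmem⟩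
        have h3 : (T' p - 1, 0) ∈ alpha := YoungDiagram.mem_iff_lt_rowLen.2 h2
        have h4 := YoungDiagram.mem_iff_lt_colLen.1 h3
        omega
      · have : ¬ 1 ≤ T' p := fun h => hp ((hT'.2.1 p).1 h)
        omega
    apply Finite.of_injective
      (fun T' : {T : ℕ × ℕ → ℕ // IsLRTableau lamTilde alpha rho T} =>
        fun p : ↥(skewCells lamTilde rho) =>
          (⟨T'.1 p, Nat.lt_succ_of_le (hbound T'.1 T'.2 p)⟩ : Fin (N + 1)))
    intro T1 T2 h
    apply Subtype.ext
    funext p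
    by_cases hp : p ∈ skewCells lamTilde rho
    · simpa using congrFun h ⟨p, hp⟩
    · have h1 : ¬ 1 ≤ T1.1 p := fun hh => hp ((T1.2.2.1 p).1 hh)
      have h2 : ¬ 1 ≤ T2.1 p := fun hh => hp ((T2.2.2.1 p).1 hh)
      omega

end QCGrass
end
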